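/- The partial decode-and-forward secrecy sum rate R^I equals (1/2)·min(log T1, log(T2·T3)) where T1, T2, T3 are the given quotients; moreover, when h12 ≥ h1 and h21 ≥ h2, R^I is maximized over (P10, P20) (with P10+P12 and P20+P21 held fixed) by setting P10 = P20 = 0. -/
import Mathlib


theorem partialDF_sumRate_maximized_at_zero
    (h1 h2 g1 g2 h12 h21 P1 P2 PU1 PU2 P10 P12 P20 P21 : ℝ)
    (hh1 : 0 < h1) (hh2 : 0 < h2) (hg1 : 0 < g1) (hg2 : 0 < g2)
    (h12ge : h12 ≥ h1) (h21ge : h21 ≥ h2)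
    (hP1 : 0 < P1) (hP2 : 0 < P2)
    (hPU1 : 0 ≤ PU1) (hPU2 : 0 ≤ PU2) (hP10 : 0 ≤ P10) (hP12 : 0 ≤ P12)
    (hP20 : 0 ≤ P20) (hP21 : 0 ≤ P21)
    (hsplit1 : P10 + P12 = P1 - PU1) (hsplit2 : P20 + P21 = P2 - PU2) :
    let D : ℝ := 1 + g1 * P1 + g2 * P2 + 2 * Real.sqrt (g1 * g2 * PU1 * PU2)
    let T1 : ℝ := (1 + h1 * P1 + h2 * P2 + 2 * Real.sqrt (h1 * h2 * PU1 * PU2)) / D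
    let T2 : ℝ := ((1 + h12 * (P10 + P12)) * (1 + h21 * (P20 + P21))) / D
    let T3 : ℝ → ℝ → ℝ := fun p q =>
      (1 + h1 * p + h2 * q) / ((1 + h12 * p) * (1 + h21 * q))
    let RI : ℝ → ℝ → ℝ := fun p q =>
      (1 / 2) * min (Real.log T1) (Real.log T2 + Real.log (T3 p q))
    RI P10 P20 = (1 / 2) * min (Real.log T1) (Real.log (T2 * T3 P10 P20)) ∧
      RI P10 P20 ≤ RI 0 0 := by
  intro D T1 T2 T3 RI
  have hh12 : 0 < h12 := lt_of_lt_of_le hh1 h12ge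
  have hh21 : 0 < h21 := lt_of_lt_of_le hh2 h21ge
  have hD : 0 < D := by
    have := Real.sqrt_nonneg (g1 * g2 * PU1 * PU2)
    have := mul_pos hg1 hP1
    have := mul_pos hg2 hP2
    simp only [D]; nlinarith
  have hT2 : 0 < T2 := by
    apply div_pos _ hD
    apply mul_pos <;> nlinarith [mul_nonneg (le_of_lt hh12) (add_nonneg hP10 hP12),
      mul_nonneg (le_of_lt hh21) (add_nonneg hP20 hP21)]
  have hT3den : 0 < (1 + h12 * P10) * (1 + h21 * P20) := by
    nlinarith [mul_nonneg (le_of_lt hh12) hP10, mul_nonneg (le_of_lt hh21) hP20]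
  have hT3num : 0 < 1 + h1 * P10 + h2 * P20 := by
    nlinarith [mul_nonneg (le_of_lt hh1) hP10, mul_nonneg (le_of_lt hh2) hP20]
  have hT3 : 0 < T3 P10 P20 := div_pos hT3num hT3den
  have hlogmul : Real.log (T2 * T3 P10 P20) = Real.log T2 + Real.log (T3 P10 P20) :=
    Real.log_mul (ne_of_gt hT2) (ne_of_gt hT3)
  constructor
  · simp only [RI, hlogmul]
  · have hT3le : T3 P10 P20 ≤ 1 := by
      rw [div_le_one hT3den]
      nlinarith [mul_nonneg (mul_nonneg (le_of_lt hh12) hP10) (mul_nonneg (le_of_lt hh21) hP20),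
        mul_nonneg hP10 (sub_nonneg.mpr h12ge), mul_nonneg hP20 (sub_nonneg.mpr h21ge)]
    have hlog3 : Real.log (T3 P10 P20) ≤ 0 := Real.log_nonpos (le_of_lt hT3) hT3le
    have hT300 : T3 0 0 = 1 := by simp [T3]
    simp only [RI, hT300, Real.log_one, add_zero]
    apply mul_le_mul_of_nonneg_left _ (by norm_num : (0:ℝ) ≤ 1/2)
    exact min_le_min le_rfl (by linarith)
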